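/- arXiv:2112.11535 — 2 statements merged into one kernel-verified Lean document; each statement's English description precedes it below -/
import Mathlib

section
/- Let D, D' be nonnegative selfadjoint operators (or elements of C*-algebras) and φ : ℝ → ℝ a continuous function vanishing at infinity that is strictly decreasing on [−1, ∞). Then for λ ≥ 0 not in σ(D), the spectral projection of D for the interval (−1, λ) equals the spectral projection of φ(D) for the interval (φ(λ), φ(−1)), and the endpoints φ(λ), φ(−1) are not in σ(φ(D)). -/
lemma indicator_Ioo_continuousAt {a b x : ℝ} (hxa : x ≠ a) (hxb : x ≠ b) :
    ContinuousAt (Set.indicator (Set.Ioo a b) (fun _ => (1 : ℝ))) x := by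
  by_cases hx : x ∈ Set.Ioo a b
  · have h : ∀ᶠ y in nhds x, Set.indicator (Set.Ioo a b) (fun _ => (1:ℝ)) y = 1 :=
      (isOpen_Ioo.eventually_mem hx).mono fun y hy => Set.indicator_of_mem hy _
    exact (continuousAt_const (y := (1:ℝ))).congr (Filter.EventuallyEq.symm h)
  · have hx' : x ∈ (Set.Icc a b)ᶜ := by
      intro h
      rcases lt_or_eq_of_le h.1 with h1 | h1
      · rcases lt_or_eq_of_le h.2 with h2 | h2
        · exact hx ⟨h1, h2⟩
        · exact hxb h2
      · exact hxa h1.symm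
    have h : ∀ᶠ y in nhds x, Set.indicator (Set.Ioo a b) (fun _ => (1:ℝ)) y = 0 :=
      (isClosed_Icc.isOpen_compl.eventually_mem hx').mono fun y hy =>
        Set.indicator_of_notMem (fun hmem => hy (Set.Ioo_subset_Icc_self hmem)) _
    exact (continuousAt_const (y := (0:ℝ))).congr (Filter.EventuallyEq.symm h)

/-- Let `D` be a nonnegative selfadjoint element of a unital C*-algebra and
`φ : ℝ → ℝ` a continuous function vanishing at infinity that is strictly decreasing on
`[-1, ∞)`. Then for `λ ≥ 0` not in `σ(D)`, the spectral projection of `D` for `(-1, λ)`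
equals the spectral projection of `φ(D)` for `(φ(λ), φ(-1))`, and the endpoints `φ(λ)`,
`φ(-1)` are not in `σ(φ(D))`. -/
theorem spectral_projection_functional_transform
    {A : Type*} [CStarAlgebra A] (D : A) (hD : IsSelfAdjoint D)
    (hDpos : spectrum ℝ D ⊆ Set.Ici 0)
    (φ : ℝ → ℝ) (hφcont : Continuous φ)
    (hφ0 : Filter.Tendsto φ (Filter.cocompact ℝ) (nhds 0))
    (hφanti : StrictAntiOn φ (Set.Ici (-1)))
    (lam : ℝ) (hlam : 0 ≤ lam) (hlamD : lam ∉ spectrum ℝ D) :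
    cfc (Set.indicator (Set.Ioo (-1) lam) (fun _ => (1 : ℝ))) D =
      cfc (Set.indicator (Set.Ioo (φ lam) (φ (-1))) (fun _ => (1 : ℝ))) (cfc φ D) ∧
    φ lam ∉ spectrum ℝ (cfc φ D) ∧ φ (-1) ∉ spectrum ℝ (cfc φ D) := by
  have hIci : spectrum ℝ D ⊆ Set.Ici (-1 : ℝ) :=
    hDpos.trans (Set.Ici_subset_Ici.mpr (by norm_num))
  have hne1 : (-1:ℝ) ∉ spectrum ℝ D := fun h => by
    have := hDpos h; simp only [Set.mem_Ici] at this; linarith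
  have hφc : ContinuousOn φ (spectrum ℝ D) := hφcont.continuousOn
  have hφD : spectrum ℝ (cfc φ D) = φ '' spectrum ℝ D := cfc_map_spectrum φ D
  have hlam' : lam ∈ Set.Ici (-1:ℝ) := le_trans (by norm_num) hlam
  have hm1 : (-1:ℝ) ∈ Set.Ici (-1:ℝ) := Set.mem_Ici.mpr le_rfl
  have h2 : φ lam ∉ spectrum ℝ (cfc φ D) := by
    rw [hφD]
    rintro ⟨x, hx, hxe⟩
    exact hlamD (hφanti.injOn (hIci hx) hlam' hxe ▸ hx)
  have h3 : φ (-1) ∉ spectrum ℝ (cfc φ D) := by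
    rw [hφD]
    rintro ⟨x, hx, hxe⟩
    have hxx := hφanti.injOn (hIci hx) hm1 hxe
    have := hDpos hx; simp only [Set.mem_Ici] at this; linarith [hxx ▸ this]
  refine ⟨?_, h2, h3⟩
  have hc1 : ContinuousOn (Set.indicator (Set.Ioo (-1) lam) fun _ => (1:ℝ)) (spectrum ℝ D) :=
    fun x hx => (indicator_Ioo_continuousAt
      (fun h => hne1 (by rw [← h]; exact hx)) (fun h => hlamD (by rw [← h]; exact hx))).continuousWithinAt
  have hc2 : ContinuousOn (Set.indicator (Set.Ioo (φ lam) (φ (-1))) fun _ => (1:ℝ))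
      (φ '' spectrum ℝ D) := by
    rw [← hφD]
    exact fun x hx => (indicator_Ioo_continuousAt
      (fun h => h2 (by rw [← h]; exact hx)) (fun h => h3 (by rw [← h]; exact hx))).continuousWithinAt
  rw [← cfc_comp (Set.indicator (Set.Ioo (φ lam) (φ (-1))) fun _ => (1:ℝ)) φ D hD hc2 hφc]
  apply cfc_congr
  intro x hx
  have hx0 : (0:ℝ) ≤ x := hDpos hx
  have hxI : x ∈ Set.Ici (-1:ℝ) := hIci hx
  have hxne : x ≠ lam := fun h => hlamD (by rw [← h]; exact hx)
  rcases lt_or_gt_of_ne hxne with hlt | hgt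
  · have hmem : x ∈ Set.Ioo (-1:ℝ) lam := ⟨by linarith, hlt⟩
    have hmem' : φ x ∈ Set.Ioo (φ lam) (φ (-1)) :=
      ⟨hφanti hxI hlam' hlt, hφanti hm1 hxI (by linarith)⟩
    simp [Set.indicator_of_mem hmem, Function.comp, Set.indicator_of_mem hmem']
  · have hmem : x ∉ Set.Ioo (-1:ℝ) lam := fun h => absurd h.2 (not_lt.mpr hgt.le)
    have hmem' : φ x ∉ Set.Ioo (φ lam) (φ (-1)) := fun h =>
      absurd h.1 (not_lt.mpr (hφanti hlam' hxI hgt).le)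
    simp [Set.indicator_of_notMem hmem, Function.comp, Set.indicator_of_notMem hmem']
end

section
/- Let X be a metric space with isometric action of a countable group G, and Z ⊆ X a subset such that for every R > 0 and every subset Y of X of diameter ≤ R there exists g ∈ G with gY ⊆ {z ∈ Z : d(z, X∖Z) > R}. Let φ be a G-equivariant finitely additive projection-valued measure on X on a Hilbert space H with G-action, and A a G-invariant bounded operator such that for all R, ε there is a set Y of diameter ≤ R with ‖φ(Y)Aφ(Y)‖ ≥ ½‖A‖, and ‖φ(Z_R) A φ(Z_R)‖ < ε where Z_R := {z ∈ Z : d(z, X∖Z) > R}. Then A = 0. -/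
/-- Let `X` be a metric space with an isometric action of a countable
group `G` and `Z ⊆ X` a wide subset: for every `R > 0` and every subset `Y` of diameter
`≤ R` there is `g ∈ G` with `gY ⊆ Z_R := {z ∈ Z | d(z, X∖Z) > R}`. Let `φ` be a
`G`-equivariant finitely additive projection-valued measure on `X` acting on a Hilbert
space `H` carrying a unitary representation `U` of `G`, and let `A` be a `G`-invariant
bounded operator such that for all `R, ε > 0` there is a set `Y` of diameter `≤ R` with
`‖φ(Y)Aφ(Y)‖ ≥ ½‖A‖` while `‖φ(Z_R)Aφ(Z_R)‖ < ε`. Then `A = 0`. -/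
theorem wideness_injectivity
    {X : Type*} [MetricSpace X] {G : Type*} [Group G] [Countable G]
    [MulAction G X] (hiso : ∀ g : G, Isometry (fun x : X => g • x))
    {H : Type*} [NormedAddCommGroup H] [InnerProductSpace ℂ H] [CompleteSpace H]
    (U : G →* (H →L[ℂ] H)ˣ)
    (hU : ∀ g : G, star (U g : H →L[ℂ] H) * (U g : H →L[ℂ] H) = 1 ∧
      (U g : H →L[ℂ] H) * star (U g : H →L[ℂ] H) = 1)
    (φ : Set X → (H →L[ℂ] H))
    (hproj : ∀ S : Set X, IsIdempotentElem (φ S) ∧ IsSelfAdjoint (φ S))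
    (hadd : ∀ S T : Set X, Disjoint S T → φ (S ∪ T) = φ S + φ T)
    (hequiv : ∀ (g : G) (S : Set X),
      (U g : H →L[ℂ] H) * φ S * (↑(U g)⁻¹ : H →L[ℂ] H) = φ ((fun x => g • x) '' S))
    (Z : Set X)
    (hwide : ∀ R : ℝ, 0 < R → ∀ Y : Set X, Bornology.IsBounded Y → Metric.diam Y ≤ R →
      ∃ g : G, (fun x => g • x) '' Y ⊆ {z | z ∈ Z ∧ R < Metric.infDist z Zᶜ})
    (A : H →L[ℂ] H)
    (hinv : ∀ g : G, (U g : H →L[ℂ] H) * A * (↑(U g)⁻¹ : H →L[ℂ] H) = A)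
    (hnorm : ∀ R : ℝ, 0 < R → ∀ ε : ℝ, 0 < ε →
      (∃ Y : Set X, Bornology.IsBounded Y ∧ Metric.diam Y ≤ R ∧ ‖A‖ / 2 ≤ ‖φ Y * A * φ Y‖) ∧
      ‖φ {z | z ∈ Z ∧ R < Metric.infDist z Zᶜ} * A *
        φ {z | z ∈ Z ∧ R < Metric.infDist z Zᶜ}‖ < ε) :
    A = 0 := by
  classical
  have hproj_norm : ∀ S : Set X, ‖φ S‖ ≤ 1 := by
    intro S
    rcases hproj S with ⟨hid, hsa⟩
    have h1 : ‖φ S‖ * ‖φ S‖ = ‖φ S‖ := by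
      calc ‖φ S‖ * ‖φ S‖ = ‖star (φ S) * φ S‖ := (CStarRing.norm_star_mul_self).symm
        _ = ‖φ S * φ S‖ := by rw [hsa.star_eq]
        _ = ‖φ S‖ := by rw [hid]
    nlinarith [norm_nonneg (φ S)]
  have habs : ∀ S T : Set X, S ⊆ T → φ T * φ S = φ S ∧ φ S * φ T = φ S := by
    intro S T hST
    rcases hproj S with ⟨hpS, -⟩
    rcases hproj (T \ S) with ⟨hpQ, -⟩
    rcases hproj T with ⟨hpT, -⟩
    have hdisj : Disjoint S (T \ S) := Set.disjoint_sdiff_right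
    have hTeq : φ T = φ S + φ (T \ S) := by
      rw [← hadd S (T \ S) hdisj, Set.union_diff_cancel hST]
    set p := φ S with hp
    set q := φ (T \ S) with hq
    have h2 : (p + q) * (p + q) = p + q := by rw [← hTeq]; exact hpT
    have h4 : p * p + p * q + q * p + q * q = p + q := by rw [← h2]; noncomm_ring
    rw [hpS.eq, hpQ.eq] at h4
    have hsum : p * q + q * p = 0 := by
      calc p * q + q * p = (p + p * q + q * p + q) - (p + q) := by abel
        _ = (p + q) - (p + q) := by rw [h4]
        _ = 0 := sub_self _
    have h3 : p * q + p * q * p = 0 := by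
      have h := congrArg (fun B => p * B) hsum
      simp only [mul_add, mul_zero] at h
      rw [← mul_assoc, ← mul_assoc, hpS.eq] at h
      exact h
    have h4' : p * q * p + q * p = 0 := by
      have h := congrArg (fun B => B * p) hsum
      simp only [add_mul, zero_mul] at h
      rw [mul_assoc q p p, hpS.eq] at h
      exact h
    have h5 : p * q = q * p := by
      have h : p * q - q * p = (p * q + p * q * p) - (p * q * p + q * p) := by abel
      rw [h3, h4', sub_self] at h
      exact sub_eq_zero.mp h
    have h6 : p * q = 0 := by
      rw [← h5] at hsum
      have h8 : (2 : ℂ) • (p * q) = 0 := by rw [two_smul]; exact hsum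
      simpa using (smul_eq_zero.mp h8).resolve_left (by norm_num)
    have h9 : q * p = 0 := by rw [← h5]; exact h6
    constructor
    · rw [hTeq, add_mul, hpS.eq, h9, add_zero]
    · rw [hTeq, mul_add, hpS.eq, h6, add_zero]
  have hUinv : ∀ g : G, (↑(U g)⁻¹ : H →L[ℂ] H) = star (U g : H →L[ℂ] H) := by
    intro g
    have h1 : (↑(U g)⁻¹ : H →L[ℂ] H) * (U g : H →L[ℂ] H) = 1 := by
      rw [← Units.val_mul, inv_mul_cancel, Units.val_one]
    calc (↑(U g)⁻¹ : H →L[ℂ] H)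
        = (↑(U g)⁻¹ : H →L[ℂ] H) * ((U g : H →L[ℂ] H) * star (U g : H →L[ℂ] H)) := by
          rw [(hU g).2, mul_one]
      _ = ((↑(U g)⁻¹ : H →L[ℂ] H) * (U g : H →L[ℂ] H)) * star (U g : H →L[ℂ] H) := by
          rw [mul_assoc]
      _ = star (U g : H →L[ℂ] H) := by rw [h1, one_mul]
  have hnorm_map : ∀ (B : H →L[ℂ] H), star B * B = 1 → ‖B‖ ≤ 1 := by
    intro B hB
    refine ContinuousLinearMap.opNorm_le_bound B zero_le_one (fun x => ?_)
    have h2 : (inner ℂ (B x) (B x) : ℂ) = inner ℂ x x := by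
      rw [← ContinuousLinearMap.adjoint_inner_right B x (B x),
        ← ContinuousLinearMap.star_eq_adjoint]
      rw [show (star B) (B x) = (star B * B) x from rfl, hB]
      rfl
    have h1 : ‖B x‖ ^ 2 = ‖x‖ ^ 2 := by
      rw [← inner_self_eq_norm_sq (𝕜 := ℂ), ← inner_self_eq_norm_sq (𝕜 := ℂ), h2]
    have h3 : ‖B x‖ = ‖x‖ := by nlinarith [norm_nonneg (B x), norm_nonneg x]
    rw [h3, one_mul]
  have hUnorm : ∀ g : G, ‖(U g : H →L[ℂ] H)‖ ≤ 1 := fun g => hnorm_map _ (hU g).1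
  have hUinvnorm : ∀ g : G, ‖(↑(U g)⁻¹ : H →L[ℂ] H)‖ ≤ 1 := by
    intro g
    refine hnorm_map _ ?_
    rw [hUinv, star_star]
    exact (hU g).2
  have hle : ∀ (g : G) (B : H →L[ℂ] H),
      ‖(U g : H →L[ℂ] H) * B * (↑(U g)⁻¹ : H →L[ℂ] H)‖ ≤ ‖B‖ := by
    intro g B
    calc ‖(U g : H →L[ℂ] H) * B * (↑(U g)⁻¹ : H →L[ℂ] H)‖
        ≤ ‖(U g : H →L[ℂ] H) * B‖ * ‖(↑(U g)⁻¹ : H →L[ℂ] H)‖ := norm_mul_le _ _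
      _ ≤ ‖(U g : H →L[ℂ] H)‖ * ‖B‖ * ‖(↑(U g)⁻¹ : H →L[ℂ] H)‖ := by
          gcongr; exact norm_mul_le _ _
      _ ≤ 1 * ‖B‖ * 1 := by
          gcongr <;> first | exact norm_nonneg _ | exact hUnorm g | exact hUinvnorm g
      _ = ‖B‖ := by ring
  have hconj : ∀ (g : G) (B : H →L[ℂ] H),
      ‖(U g : H →L[ℂ] H) * B * (↑(U g)⁻¹ : H →L[ℂ] H)‖ = ‖B‖ := by
    intro g B
    refine le_antisymm (hle g B) ?_
    have h1 : (↑(U g)⁻¹ : H →L[ℂ] H) * (U g : H →L[ℂ] H) = 1 := by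
      rw [← Units.val_mul, inv_mul_cancel, Units.val_one]
    have hBeq : B = (U g⁻¹ : H →L[ℂ] H) *
        ((U g : H →L[ℂ] H) * B * (↑(U g)⁻¹ : H →L[ℂ] H)) * (↑(U g⁻¹)⁻¹ : H →L[ℂ] H) := by
      simp only [map_inv, inv_inv]
      calc B = ((↑(U g)⁻¹ : H →L[ℂ] H) * (U g : H →L[ℂ] H)) * B *
                ((↑(U g)⁻¹ : H →L[ℂ] H) * (U g : H →L[ℂ] H)) := by rw [h1, one_mul, mul_one]
        _ = (↑(U g)⁻¹ : H →L[ℂ] H) *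
            ((U g : H →L[ℂ] H) * B * (↑(U g)⁻¹ : H →L[ℂ] H)) * (U g : H →L[ℂ] H) := by
            simp only [mul_assoc]
    calc ‖B‖ = ‖(U g⁻¹ : H →L[ℂ] H) * ((U g : H →L[ℂ] H) * B * (↑(U g)⁻¹ : H →L[ℂ] H)) *
              (↑(U g⁻¹)⁻¹ : H →L[ℂ] H)‖ := by rw [← hBeq]
      _ ≤ ‖(U g : H →L[ℂ] H) * B * (↑(U g)⁻¹ : H →L[ℂ] H)‖ := hle g⁻¹ _
  have key : ∀ ε : ℝ, 0 < ε → ‖A‖ / 2 ≤ ε := by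
    intro ε hε
    obtain ⟨⟨Y, hYb, hYdiam, hYnorm⟩, hZnorm⟩ := hnorm 1 one_pos ε hε
    obtain ⟨g, hg⟩ := hwide 1 one_pos Y hYb hYdiam
    set ZR := {z | z ∈ Z ∧ (1:ℝ) < Metric.infDist z Zᶜ} with hZR
    set gY := (fun x => g • x) '' Y with hgY
    have h1 : (↑(U g)⁻¹ : H →L[ℂ] H) * (U g : H →L[ℂ] H) = 1 := by
      rw [← Units.val_mul, inv_mul_cancel, Units.val_one]
    have e1 : φ gY * A * φ gY =
        (U g : H →L[ℂ] H) * (φ Y * A * φ Y) * (↑(U g)⁻¹ : H →L[ℂ] H) := by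
      rw [hgY, ← hequiv g Y]
      conv_lhs => rw [← hinv g]
      calc ((U g : H →L[ℂ] H) * φ Y * (↑(U g)⁻¹ : H →L[ℂ] H)) *
            ((U g : H →L[ℂ] H) * A * (↑(U g)⁻¹ : H →L[ℂ] H)) *
            ((U g : H →L[ℂ] H) * φ Y * (↑(U g)⁻¹ : H →L[ℂ] H))
          = (U g : H →L[ℂ] H) * φ Y * ((↑(U g)⁻¹ : H →L[ℂ] H) * (U g : H →L[ℂ] H)) * (A *
            (((↑(U g)⁻¹ : H →L[ℂ] H) * (U g : H →L[ℂ] H)) * (φ Y *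
            (↑(U g)⁻¹ : H →L[ℂ] H)))) := by simp only [mul_assoc]
        _ = (U g : H →L[ℂ] H) * (φ Y * A * φ Y) * (↑(U g)⁻¹ : H →L[ℂ] H) := by
            rw [h1]; simp only [mul_one, one_mul, mul_assoc]
    have e2 : ‖φ gY * A * φ gY‖ = ‖φ Y * A * φ Y‖ := by rw [e1, hconj]
    obtain ⟨habs1, habs2⟩ := habs gY ZR hg
    have e3 : φ gY * A * φ gY = φ gY * (φ ZR * A * φ ZR) * φ gY := by
      calc φ gY * A * φ gY = (φ gY * φ ZR) * A * (φ ZR * φ gY) := by rw [habs2, habs1]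
        _ = φ gY * (φ ZR * A * φ ZR) * φ gY := by simp only [mul_assoc]
    have e4 : ‖φ gY * A * φ gY‖ ≤ ‖φ ZR * A * φ ZR‖ := by
      rw [e3]
      calc ‖φ gY * (φ ZR * A * φ ZR) * φ gY‖
          ≤ ‖φ gY * (φ ZR * A * φ ZR)‖ * ‖φ gY‖ := norm_mul_le _ _
        _ ≤ ‖φ gY‖ * ‖φ ZR * A * φ ZR‖ * ‖φ gY‖ := by gcongr; exact norm_mul_le _ _
        _ ≤ 1 * ‖φ ZR * A * φ ZR‖ * 1 := by
            gcongr <;> first | exact norm_nonneg _ | exact hproj_norm _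
        _ = ‖φ ZR * A * φ ZR‖ := by ring
    calc ‖A‖ / 2 ≤ ‖φ Y * A * φ Y‖ := hYnorm
      _ = ‖φ gY * A * φ gY‖ := e2.symm
      _ ≤ ‖φ ZR * A * φ ZR‖ := e4
      _ ≤ ε := le_of_lt hZnorm
  have hA : ‖A‖ ≤ 0 := by
    by_contra h
    push_neg at h
    have := key (‖A‖ / 4) (by linarith)
    linarith
  exact norm_le_zero_iff.mp hA
end
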